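/- arXiv:0906.4540 — 2 statements merged into one kernel-verified Lean document; each statement's English description precedes it below -/
import Mathlib

section
/- For all u, a, h in the Hardy space with u, a sufficiently smooth (e.g. in H^s_+, s>1/2), the Hankel operator of symbol a·H_u(a) satisfies H_{a H_u(a)}(h) = H_u(a)·H_a(h) + H_u(a·Π(conj(a) h) − ⟨h, a⟩ a). -/
noncomputable section

open scoped ComplexConjugate

/-- Hankel operator of symbol `u` on Fourier coefficients. -/
def hankel (u : ℕ → ℂ) (h : ℕ → ℂ) : ℕ → ℂ :=
  fun k => ∑' ℓ : ℕ, u (k + ℓ) * conj (h ℓ)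

/-- Cauchy product: Fourier coefficients of the product of two Hardy functions. -/
def mulCoeff (f g : ℕ → ℂ) : ℕ → ℂ :=
  fun k => ∑ i ∈ Finset.range (k + 1), f i * g (k - i)

/-- Fourier coefficients of `Π(conj(a)·h)`:
`(Π(conj a · h))^(n) = Σ_{k≥0} conj(â(k)) ĥ(k+n)`. -/
def piConjMul (a h : ℕ → ℂ) : ℕ → ℂ :=
  fun n => ∑' k : ℕ, conj (a k) * h (k + n)

/-- The `L²` inner product `⟨h, a⟩ = Σ_{k≥0} ĥ(k) conj(â(k))`. -/
def ip (h a : ℕ → ℂ) : ℂ := ∑' k : ℕ, h k * conj (a k)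

/-!
On the circle, `a h̄ = H_a(h) + ḡ` with `g := Π(ā h) − ⟨h, a⟩`, a function of strictly positive
frequencies (here `g = update (piConjMul a h) 0 0`). Hence `H_{ab}(h) = b H_a(h) + H_b(g)`.
For `b = H_u(a) = Π(u ā)` the part `(I − Π)(u ā)` only carries negative frequencies, as does `ḡ`,
so `Π` kills their product and `H_b(g) = Π(u ā ḡ) = H_u(a g)`, which is the second term.

On Fourier coefficients every rearrangement is an absolutely convergent double series: `u` and
`a` are summable (from `2x ≤ w x² + 1/w` with `w = (1 + k)^{2s}` and `2s > 1`), hence so is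
`H_u(a)`, and `h` is bounded.
-/

open Finset Function

theorem HasSum.sum_antidiagonal {α A : Type*} [AddCommMonoid α] [TopologicalSpace α]
    [ContinuousAdd α] [RegularSpace α] [AddCommMonoid A] [HasAntidiagonal A]
    {F : A × A → α} {s : α} (hF : HasSum F s) :
    HasSum (fun n => ∑ p ∈ antidiagonal n, F p) s := by
  refine (HasAntidiagonal.sigmaAntidiagonalEquivProd.hasSum_iff.2 hF).sigma fun n => ?_
  rw [← sum_coe_sort]
  exact hasSum_fintype _

theorem summable_of_summable_mul_sq {ι : Type*} {w x : ι → ℝ} (hw : ∀ i, 0 < w i)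
    (hx : ∀ i, 0 ≤ x i) (hwx : Summable fun i => w i * x i ^ 2) (hw' : Summable fun i => 1 / w i) :
    Summable x := by
  refine ((hwx.add hw').div_const 2).of_nonneg_of_le hx fun i => ?_
  have hwi := hw i
  rw [le_div_iff₀ two_pos, ← sub_nonneg]
  have key : w i * x i ^ 2 + 1 / w i - x i * 2 = (w i * x i - 1) ^ 2 / w i := by
    field_simp
    ring
  rw [key]
  positivity

theorem summable_norm_of_summable_rpow_mul_sq {E : Type*} [SeminormedAddGroup E] {u : ℕ → E}
    {s : ℝ} (hs : 1 / 2 < s)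
    (hu : Summable fun k : ℕ => (1 + (k : ℝ)) ^ (2 * s) * ‖u k‖ ^ 2) :
    Summable fun k => ‖u k‖ := by
  refine summable_of_summable_mul_sq (fun k => by positivity) (fun k => norm_nonneg _) hu ?_
  have hw := (Real.summable_one_div_nat_add_rpow 1 (2 * s)).2 (by linarith)
  refine hw.congr fun k => ?_
  rw [add_comm, abs_of_pos (by positivity)]

theorem summable_mul_of_summable_norm_of_norm_le {ι R : Type*} [NormedRing R] [CompleteSpace R]
    {f g : ι → R} {C : ℝ} (hf : Summable fun i => ‖f i‖) (hg : ∀ i, ‖g i‖ ≤ C) :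
    Summable fun i => f i * g i :=
  Summable.of_norm_bounded (hf.mul_right C) fun i =>
    (norm_mul_le _ _).trans (mul_le_mul_of_nonneg_left (hg i) (norm_nonneg _))

theorem summable_mul_comp_add {f g : ℕ → ℝ} (hf : Summable f) (hg : Summable g)
    (hf0 : ∀ n, 0 ≤ f n) (hg0 : ∀ n, 0 ≤ g n) :
    Summable fun p : ℕ × ℕ => f p.1 * g (p.1 + p.2) := by
  have hshift (i : ℕ) : Summable fun j => g (i + j) := by
    simpa only [add_comm i] using (summable_nat_add_iff i).2 hg
  refine (summable_prod_of_nonneg fun p => mul_nonneg (hf0 _) (hg0 _)).2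
    ⟨fun i => (hshift i).mul_left (f i), ?_⟩
  refine (hf.mul_right (∑' n, g n)).of_nonneg_of_le
    (fun i => tsum_nonneg fun j => mul_nonneg (hf0 _) (hg0 _)) fun i => ?_
  change ∑' j, f i * g (i + j) ≤ _
  rw [tsum_mul_left]
  refine mul_le_mul_of_nonneg_left ?_ (hf0 i)
  exact (hshift i).tsum_le_tsum_of_inj _ (add_right_injective i) (fun n _ => hg0 n)
    (fun j => le_rfl) hg

section Hankel

variable {u a b g h : ℕ → ℂ} {C : ℝ}

theorem mulCoeff_comm (f g : ℕ → ℂ) : mulCoeff f g = mulCoeff g f := by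
  ext n
  rw [mulCoeff, mulCoeff, ← Nat.sum_antidiagonal_eq_sum_range_succ (fun i j => f i * g j),
    ← Nat.sum_antidiagonal_eq_sum_range_succ (fun i j => g i * f j), ← Nat.sum_antidiagonal_swap]
  simp only [Prod.fst_swap, Prod.snd_swap, mul_comm]

theorem mulCoeff_update_zero (f g : ℕ → ℂ) :
    mulCoeff f (update g 0 0) = fun n => mulCoeff f g n - g 0 * f n := by
  ext n
  simp only [mulCoeff, sum_range_succ, Nat.sub_self, update_self]
  rw [sum_congr rfl fun i hi => by rw [update_of_ne (by grind)]]
  ring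

theorem mulCoeff_add_eq_sum_add_sum (f g : ℕ → ℂ) (k ℓ : ℕ) :
    mulCoeff f g (k + ℓ) = ∑ j ∈ range (k + 1), g j * f (k - j + ℓ) +
      ∑ n ∈ range ℓ, g (k + 1 + n) * f (ℓ - 1 - n) := by
  rw [mulCoeff_comm, mulCoeff, show k + ℓ + 1 = k + 1 + ℓ by ring, sum_range_add]
  congr 1 <;> refine sum_congr rfl fun j hj => ?_ <;> grind

theorem piConjMul_zero : piConjMul a h 0 = ip h a :=
  tsum_congr fun k => by rw [add_zero, mul_comm]

theorem conj_piConjMul (n : ℕ) : conj (piConjMul a h n) = ∑' k, a k * conj (h (k + n)) := by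
  simp only [piConjMul, Complex.conj_tsum, map_mul, Complex.conj_conj]

theorem norm_piConjMul_le (ha : Summable fun n => ‖a n‖) (hh : ∀ n, ‖h n‖ ≤ C) (n : ℕ) :
    ‖piConjMul a h n‖ ≤ (∑' k, ‖a k‖) * C :=
  tsum_of_norm_bounded (ha.hasSum.mul_right C) fun k => by
    rw [norm_mul, Complex.norm_conj]
    exact mul_le_mul_of_nonneg_left (hh _) (norm_nonneg _)

theorem norm_update_piConjMul_le (ha : Summable fun n => ‖a n‖) (hh : ∀ n, ‖h n‖ ≤ C) (n : ℕ) :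
    ‖update (piConjMul a h) 0 0 n‖ ≤ (∑' k, ‖a k‖) * C := by
  rcases eq_or_ne n 0 with rfl | hn
  · simpa using mul_nonneg (tsum_nonneg fun _ => norm_nonneg _) ((norm_nonneg _).trans (hh 0))
  · rw [update_of_ne hn]
    exact norm_piConjMul_le ha hh n

theorem hasSum_hankel (hu : Summable fun n => ‖u n‖) (hg : ∀ n, ‖g n‖ ≤ C) (k : ℕ) :
    HasSum (fun ℓ => u (k + ℓ) * conj (g ℓ)) (hankel u g k) := by
  refine Summable.hasSum (summable_mul_of_summable_norm_of_norm_le (C := C) ?_ fun ℓ => ?_)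
  · simpa only [add_comm k] using (summable_nat_add_iff k).2 hu
  · rw [Complex.norm_conj]
    exact hg ℓ

theorem summable_norm_hankel (hu : Summable fun n => ‖u n‖) (ha : Summable fun n => ‖a n‖) :
    Summable fun j => ‖hankel u a j‖ := by
  have hF := (summable_mul_comp_add ha hu (fun _ => norm_nonneg _) fun _ => norm_nonneg _).prod_symm
  refine hF.prod.of_nonneg_of_le (fun _ => norm_nonneg _) fun j => ?_
  have hterm (ℓ : ℕ) : ‖u (j + ℓ) * conj (a ℓ)‖ = ‖a ℓ‖ * ‖u (ℓ + j)‖ := by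
    rw [norm_mul, Complex.norm_conj, mul_comm, add_comm]
  refine (norm_tsum_le_tsum_norm ?_).trans_eq (tsum_congr hterm)
  exact (hF.prod_factor j).congr fun ℓ => (hterm ℓ).symm

theorem hankel_mulCoeff_eq_hankel_hankel (hu : Summable fun n => ‖u n‖)
    (ha : Summable fun n => ‖a n‖) (hg : ∀ n, ‖g n‖ ≤ C) (k : ℕ) :
    hankel u (mulCoeff a g) k = hankel (hankel u a) g k := by
  set F : ℕ × ℕ → ℂ := fun p => u (k + (p.1 + p.2)) * conj (a p.1) * conj (g p.2)
  have hF : Summable F := by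
    have hu' : Summable fun n => ‖u (n + k)‖ := (summable_nat_add_iff k).2 hu
    refine Summable.of_norm_bounded
      ((summable_mul_comp_add ha hu' (fun _ => norm_nonneg _) fun _ => norm_nonneg _).mul_right C)
      fun p => ?_
    simp only [F, norm_mul, Complex.norm_conj, add_comm k]
    grw [hg p.2]
    exact le_of_eq (by ring)
  have hdiag (L : ℕ) : u (k + L) * conj (mulCoeff a g L) = ∑ p ∈ antidiagonal L, F p := by
    rw [mulCoeff, ← Nat.sum_antidiagonal_eq_sum_range_succ (fun i j => a i * g j), map_sum,
      mul_sum]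
    refine sum_congr rfl fun p hp => ?_
    rw [← mem_antidiagonal.1 hp, map_mul, ← mul_assoc]
  calc hankel u (mulCoeff a g) k = ∑' p, F p := by
        rw [← hF.hasSum.sum_antidiagonal.tsum_eq]
        exact tsum_congr hdiag
    _ = ∑' j, ∑' i, F (i, j) := by
        rw [hF.tsum_prod]
        exact (hF.tsum_comm (f := fun i j => F (i, j))).symm
    _ = hankel (hankel u a) g k := by
        refine tsum_congr fun j => ?_
        rw [hankel, ← tsum_mul_right]
        refine tsum_congr fun i => ?_
        simp only [F]
        ring_nf

theorem hasSum_hankel_update_piConjMul (ha : Summable fun n => ‖a n‖)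
    (hb : Summable fun n => ‖b n‖) (hh : ∀ n, ‖h n‖ ≤ C) (k : ℕ) :
    HasSum (fun ℓ => ∑ n ∈ range ℓ, b (k + 1 + n) * a (ℓ - 1 - n) * conj (h ℓ))
      (hankel b (update (piConjMul a h) 0 0) k) := by
  set G : ℕ × ℕ → ℂ := fun p => b (k + 1 + p.1) * a p.2 * conj (h (p.1 + p.2 + 1))
  have hG : Summable G := by
    have hb' : Summable fun n => ‖b (n + (k + 1))‖ := (summable_nat_add_iff (k + 1)).2 hb
    refine Summable.of_norm_bounded
      ((hb'.mul_of_nonneg ha (fun _ => norm_nonneg _) fun _ => norm_nonneg _).mul_right C)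
      fun p => ?_
    simp only [G, norm_mul, Complex.norm_conj, add_comm (k + 1)]
    grw [hh]
  have hsum : ∑' p, G p = hankel b (update (piConjMul a h) 0 0) k := by
    rw [hG.tsum_prod, hankel,
      (hasSum_hankel hb (norm_update_piConjMul_le ha hh) k).summable.tsum_eq_zero_add]
    simp only [update_self, map_zero, mul_zero, zero_add, ne_eq, Nat.add_one_ne_zero,
      not_false_eq_true, update_of_ne, conj_piConjMul]
    refine tsum_congr fun n => ?_
    rw [← tsum_mul_left]
    exact tsum_congr fun m => by simp only [G]; ring_nf
  rw [← hasSum_nat_add_iff' 1, sum_range_one, range_zero, sum_empty, sub_zero]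
  refine (hsum ▸ hG.hasSum.sum_antidiagonal).congr_fun fun L => ?_
  rw [Nat.sum_antidiagonal_eq_sum_range_succ (fun n m => G (n, m))]
  refine sum_congr rfl fun n hn => ?_
  have hnL : n < L + 1 := mem_range.1 hn
  simp only [G]
  congr 3
  omega

theorem hankel_symbol_mulCoeff_eq_add (ha : Summable fun n => ‖a n‖)
    (hb : Summable fun n => ‖b n‖) (hh : ∀ n, ‖h n‖ ≤ C) (k : ℕ) :
    hankel (mulCoeff a b) h k =
      mulCoeff b (hankel a h) k + hankel b (update (piConjMul a h) 0 0) k := by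
  refine HasSum.tsum_eq ?_
  simp only [mulCoeff_add_eq_sum_add_sum, add_mul, sum_mul]
  refine HasSum.add (hasSum_sum fun j _ => ?_) (hasSum_hankel_update_piConjMul ha hb hh k)
  simpa only [mul_assoc] using (hasSum_hankel ha hh (k - j)).mul_left (b j)

end Hankel

/-- For `u, a` sufficiently smooth Hardy functions and `h ∈ L²_+`:
`H_{a·H_u(a)}(h) = H_u(a)·H_a(h) + H_u(a·Π(conj(a)h) − ⟨h,a⟩a)`. -/
theorem stmt6 (u a h : ℕ → ℂ)
    (hu : ∃ s : ℝ, 1 / 2 < s ∧ Summable fun k : ℕ => (1 + (k : ℝ)) ^ (2 * s) * ‖u k‖ ^ 2)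
    (ha : ∃ s : ℝ, 1 / 2 < s ∧ Summable fun k : ℕ => (1 + (k : ℝ)) ^ (2 * s) * ‖a k‖ ^ 2)
    (hh : Summable fun k : ℕ => ‖h k‖ ^ 2) :
    ∀ k : ℕ,
      hankel (mulCoeff a (hankel u a)) h k =
        mulCoeff (hankel u a) (hankel a h) k +
          hankel u (fun n => mulCoeff a (piConjMul a h) n - ip h a * a n) k := by
  intro k
  obtain ⟨s, hs, hus⟩ := hu
  obtain ⟨t, ht, hat⟩ := ha
  have hu1 := summable_norm_of_summable_rpow_mul_sq hs hus
  have ha1 := summable_norm_of_summable_rpow_mul_sq ht hat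
  have hbdd (n : ℕ) : ‖h n‖ ≤ √(∑' m, ‖h m‖ ^ 2) :=
    (abs_norm (h n)).symm.trans_le (Real.abs_le_sqrt (hh.le_tsum n fun _ _ => sq_nonneg _))
  rw [hankel_symbol_mulCoeff_eq_add ha1 (summable_norm_hankel hu1 ha1) hbdd,
    ← hankel_mulCoeff_eq_hankel_hankel hu1 ha1 (norm_update_piConjMul_le ha1 hbdd),
    mulCoeff_update_zero, piConjMul_zero]

end
end

section
/- Let u ∈ M(N) with denominator zeros reciprocal to p₁,…,p_N (i.e. B(z)=∏(1−p_j z)), let b be the associated Blaschke product, and let P_u be the orthogonal projection of L²_+ onto the range of H_u. Then 1 − P_u(1) = (−1)^N p₁⋯p_N · b; in particular ‖1 − P_u(1)‖²_{L²} = |p₁⋯p_N|². -/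
noncomputable section

open MeasureTheory Real AddCircle Polynomial
open scoped ComplexConjugate

instance : Fact (0 < 2 * π) := ⟨by positivity⟩

/-- The point of the unit circle in `ℂ` corresponding to `x ∈ ℝ/2πℤ`. -/
def circlePt (x : AddCircle (2 * π)) : ℂ := (AddCircle.toCircle x : ℂ)

/-- The finite Blaschke product `b(z) = ∏_j (z − conj(p_j))/(1 − p_j z)` on the circle. -/
def blaschke {N : ℕ} (p : Fin N → ℂ) (x : AddCircle (2 * π)) : ℂ :=
  ∏ j, (circlePt x - conj (p j)) / (1 - p j * circlePt x)

lemma circlePt_coe (θ : ℝ) : circlePt (θ : AddCircle (2 * π)) = Complex.exp (θ * Complex.I) := by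
  have h : 2 * π / (2 * π) * θ = θ := by field_simp
  rw [circlePt, AddCircle.toCircle_apply_mk, h, Circle.coe_exp]

lemma conj_circlePt_coe (θ : ℝ) :
    conj (circlePt (θ : AddCircle (2 * π))) = Complex.exp (-θ * Complex.I) := by
  rw [circlePt_coe, ← Complex.exp_conj]
  congr 1
  simp [Complex.conj_I]

lemma norm_circlePt (x : AddCircle (2 * π)) : ‖circlePt x‖ = 1 := by
  simp [circlePt, Circle.norm_coe]

lemma conj_mul_circlePt (x : AddCircle (2 * π)) : conj (circlePt x) * circlePt x = 1 := by
  rw [mul_comm, Complex.mul_conj']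
  norm_cast
  simp [norm_circlePt]

lemma one_sub_ne {q z : ℂ} (hq : ‖q‖ < 1) (hz : ‖z‖ ≤ 1) : 1 - q * z ≠ 0 := by
  intro h
  have h1 : (1 : ℂ) = q * z := sub_eq_zero.mp h
  have : (1 : ℝ) = ‖q * z‖ := by rw [← h1]; simp
  rw [norm_mul] at this
  nlinarith [norm_nonneg q, norm_nonneg z]

/-- The main vanishing lemma: negative-type functions have vanishing nonneg Fourier coeffs. -/
lemma core_aux (K : ℂ → ℂ) (hK : ∀ z ∈ Metric.closedBall (0:ℂ) 1, DifferentiableAt ℂ K z)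
    (n : ℤ) (hn : 0 ≤ n) :
    fourierCoeff (fun x : AddCircle (2 * π) => conj (circlePt x) * K (conj (circlePt x))) n
      = 0 := by
  set g : ℝ → ℂ := fun θ => Complex.exp (θ * Complex.I) ^ (n.toNat + 1)
      * K (Complex.exp (θ * Complex.I)) with hg
  have hper : ∀ θ : ℝ, g (θ - 2 * π) = g θ := by
    intro θ
    have : Complex.exp (((θ - 2*π : ℝ) : ℂ) * Complex.I) = Complex.exp ((θ:ℂ) * Complex.I) := by
      push_cast
      rw [sub_mul, Complex.exp_sub, Complex.exp_two_pi_mul_I, div_one]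
    simp only [hg, this]
  have hcirc : (∮ z in C((0:ℂ),1), z ^ n.toNat * K z) = 0 := by
    refine Complex.circleIntegral_eq_zero_of_differentiable_on_off_countable zero_le_one
      Set.countable_empty (fun z hz => ?_) (fun z hz => ?_)
    · exact ((differentiableAt_pow _).mul (hK z hz)).continuousAt.continuousWithinAt
    · exact (differentiableAt_pow _).mul (hK z (Metric.ball_subset_closedBall hz.1))
  have key : (∫ θ in (0:ℝ)..2*π, g θ) = 0 := by
    rw [circleIntegral] at hcirc
    have heq : ∀ θ : ℝ, deriv (circleMap 0 1) θ •
        ((circleMap 0 1 θ) ^ n.toNat * K (circleMap 0 1 θ)) = Complex.I * g θ := by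
      intro θ
      rw [deriv_circleMap]
      simp only [circleMap, zero_add, one_mul, smul_eq_mul, hg, pow_succ,
        Complex.ofReal_one, one_pow]
      ring
    rw [intervalIntegral.integral_congr (fun θ _ => heq θ),
      intervalIntegral.integral_const_mul] at hcirc
    rcases mul_eq_zero.1 hcirc with h | h
    · exact absurd h Complex.I_ne_zero
    · exact h
  have hn' : ((n.toNat : ℂ)) = (n : ℂ) := by exact_mod_cast congrArg Int.cast (Int.toNat_of_nonneg hn)
  rw [fourierCoeff_eq_intervalIntegral _ n 0, zero_add]
  have heq2 : ∀ θ : ℝ, (fourier (-n) (θ : AddCircle (2*π)) : ℂ) •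
      ((fun x : AddCircle (2 * π) => conj (circlePt x) * K (conj (circlePt x))) (θ : AddCircle (2*π)))
      = g (-θ) := by
    intro θ
    simp only [smul_eq_mul]
    rw [fourier_coe_apply, conj_circlePt_coe]
    have hb : g (-θ) = Complex.exp (((-θ : ℝ) : ℂ) * Complex.I) ^ (n.toNat + 1)
        * K (Complex.exp (((-θ : ℝ) : ℂ) * Complex.I)) := rfl
    rw [hb, ← Complex.exp_nat_mul]
    push_cast [hn']
    rw [← mul_assoc, ← Complex.exp_add]
    have hπ : (π : ℂ) ≠ 0 := by exact_mod_cast Real.pi_ne_zero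
    congr 2
    field_simp
    ring
  rw [intervalIntegral.integral_congr (fun θ _ => heq2 θ)]
  rw [intervalIntegral.integral_comp_neg]
  have : (∫ θ in (-(2*π))..(-(0:ℝ)), g θ) = ∫ θ in (0:ℝ)..2*π, g θ := by
    rw [neg_zero]
    rw [show (-(2*π) : ℝ) = 0 - 2*π by ring, show (0:ℝ) = 2*π - 2*π by ring]
    rw [← intervalIntegral.integral_comp_sub_right g (2*π)]
    exact intervalIntegral.integral_congr (fun θ _ => hper θ)
  rw [this, key, smul_zero]

section Identities

variable {N : ℕ} (p : Fin N → ℂ)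

lemma hden (hp : ∀ j, ‖p j‖ < 1) (x : AddCircle (2*π)) (j : Fin N) :
    1 - p j * circlePt x ≠ 0 :=
  one_sub_ne (hp j) (le_of_eq (norm_circlePt x))

lemma hden' (hp : ∀ j, ‖p j‖ < 1) (x : AddCircle (2*π)) (j : Fin N) :
    1 - conj (p j) * conj (circlePt x) ≠ 0 := by
  have h1 : ‖conj (p j)‖ < 1 := by rw [RCLike.norm_conj]; exact hp j
  have h2 : ‖conj (circlePt x)‖ ≤ 1 := by rw [RCLike.norm_conj, norm_circlePt]
  exact one_sub_ne h1 h2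

lemma conj_blaschke (hp : ∀ j, ‖p j‖ < 1) (x : AddCircle (2*π)) :
    conj (blaschke p x) = (conj (circlePt x)) ^ N * (∏ j, (1 - p j * circlePt x))
      / ∏ j, (1 - conj (p j) * conj (circlePt x)) := by
  set z := circlePt x
  set w := conj z with hw
  have hwz : w * z = 1 := conj_mul_circlePt x
  rw [blaschke, map_prod]
  have h : ∀ j : Fin N, j ∈ Finset.univ → conj ((z - conj (p j)) / (1 - p j * z))
      = w * (1 - p j * z) / (1 - conj (p j) * w) := by
    intro j _
    rw [map_div₀, map_sub, map_sub, map_mul, map_one, Complex.conj_conj]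
    congr 1
    linear_combination (p j) * hwz
  rw [Finset.prod_congr rfl h, Finset.prod_div_distrib,
    Finset.prod_mul_distrib, Finset.prod_const, Finset.card_univ, Fintype.card_fin]

lemma blaschke_mul_conj (hp : ∀ j, ‖p j‖ < 1) (x : AddCircle (2*π)) :
    blaschke p x * conj (blaschke p x) = 1 := by
  set z := circlePt x
  set w := conj z with hw
  have hwz : w * z = 1 := conj_mul_circlePt x
  rw [blaschke, map_prod, ← Finset.prod_mul_distrib]
  rw [Finset.prod_eq_one]
  intro j _
  rw [map_div₀, map_sub, map_sub, map_mul, map_one, Complex.conj_conj, div_mul_div_comm]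
  rw [div_eq_one_iff_eq (mul_ne_zero (hden p hp x j) (hden' p hp x j))]
  linear_combination (1 - p j * conj (p j)) * hwz

lemma prod_lin (x : AddCircle (2*π)) : ∏ j, (circlePt x - conj (p j))
    = circlePt x ^ N * ∏ j, (1 - conj (p j) * conj (circlePt x)) := by
  have hwz : conj (circlePt x) * circlePt x = 1 := conj_mul_circlePt x
  have hc : circlePt x ^ N = ∏ _j : Fin N, circlePt x := by simp
  rw [hc, ← Finset.prod_mul_distrib]
  refine Finset.prod_congr rfl fun j _ => ?_
  linear_combination (conj (p j)) * hwz

lemma prod_lin' (x : AddCircle (2*π)) : ∏ j, (conj (circlePt x) - p j)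
    = conj (circlePt x) ^ N * ∏ j, (1 - p j * circlePt x) := by
  have hwz : conj (circlePt x) * circlePt x = 1 := conj_mul_circlePt x
  have hc : conj (circlePt x) ^ N = ∏ _j : Fin N, conj (circlePt x) := by simp
  rw [hc, ← Finset.prod_mul_distrib]
  refine Finset.prod_congr rfl fun j _ => ?_
  linear_combination (p j) * hwz

lemma id1 (hp : ∀ j, ‖p j‖ < 1) (A : Polynomial ℂ) (hAN : A.natDegree < N)
    (x : AddCircle (2*π)) :
    A.eval (circlePt x) / (∏ j, (1 - C (p j) * X)).eval (circlePt x)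
        * conj ((-1:ℂ)^N * (∏ j, p j) * blaschke p x)
      = conj (circlePt x) *
        ((C ((-1:ℂ)^N * ∏ j, conj (p j)) *
          ∑ k ∈ Finset.range N, C (A.coeff k) * X ^ (N - 1 - k)).eval (conj (circlePt x))
          / (∏ j, (1 - C (conj (p j)) * X)).eval (conj (circlePt x))) := by
  simp only [eval_prod, eval_sub, eval_one, eval_mul, eval_C, eval_X, eval_finset_sum, eval_pow]
  set z := circlePt x
  set w := conj z with hw
  have hwz : w * z = 1 := conj_mul_circlePt x
  have hP : (∏ j, (1 - p j * z)) ≠ 0 := Finset.prod_ne_zero_iff.2 fun j _ => hden p hp x j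
  have hE : (∏ j, (1 - conj (p j) * w)) ≠ 0 := Finset.prod_ne_zero_iff.2 fun j _ => hden' p hp x j
  have hsum : A.eval z * w ^ N = w * ∑ k ∈ Finset.range N, A.coeff k * w ^ (N - 1 - k) := by
    rw [Polynomial.eval_eq_sum_range' hAN, Finset.sum_mul, Finset.mul_sum]
    refine Finset.sum_congr rfl fun k hk => ?_
    have hk' := Finset.mem_range.1 hk
    have hwN : w ^ N = w ^ k * w ^ (N - 1 - k) * w := by
      rw [← pow_add, ← pow_succ]
      congr 1
      omega
    have hzk : z ^ k * w ^ k = 1 := by rw [← mul_pow, mul_comm z w, hwz, one_pow]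
    rw [hwN]
    linear_combination (A.coeff k * w ^ (N - 1 - k) * w) * hzk
  rw [map_mul, map_mul, map_pow, map_neg, map_one, map_prod, conj_blaschke p hp x]
  change A.eval z / (∏ j, (1 - p j * z)) * (((-1:ℂ)^N * ∏ j, conj (p j)) *
    ((w ^ N * ∏ j, (1 - p j * z)) / ∏ j, (1 - conj (p j) * w))) = w * ((((-1:ℂ)^N *
    ∏ j, conj (p j)) * ∑ k ∈ Finset.range N, A.coeff k * w ^ (N - 1 - k)) / ∏ j, (1 - conj (p j) * w))
  simp only [div_eq_mul_inv]
  linear_combination ((-1:ℂ)^N * (∏ j, conj (p j)) * (∏ j, (1 - conj (p j) * w))⁻¹) * hsum +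
    (A.eval z * (-1:ℂ)^N * (∏ j, conj (p j)) * w ^ N * (∏ j, (1 - conj (p j) * w))⁻¹) *
    mul_inv_cancel₀ hP

lemma id2 (hp : ∀ j, ‖p j‖ < 1) (x : AddCircle (2*π)) :
    (1 - (-1:ℂ)^N * (∏ j, p j) * blaschke p x) * conj (blaschke p x)
      = conj (circlePt x) *
        ((((∏ j, (X - C (p j))) -
            C ((-1:ℂ)^N * ∏ j, p j) * ∏ j, (1 - C (conj (p j)) * X)).divX).eval (conj (circlePt x))
          / (∏ j, (1 - C (conj (p j)) * X)).eval (conj (circlePt x))) := by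
  set z := circlePt x
  set w := conj z with hw
  have hwz : w * z = 1 := conj_mul_circlePt x
  set D : Polynomial ℂ := (∏ j, (X - C (p j))) -
    C ((-1:ℂ)^N * ∏ j, p j) * ∏ j, (1 - C (conj (p j)) * X) with hD
  have hE : (∏ j, (1 - conj (p j) * w)) ≠ 0 := Finset.prod_ne_zero_iff.2 fun j _ => hden' p hp x j
  have hprodneg : ∏ j, (-(p j)) = (-1:ℂ)^N * ∏ j, p j := by
    have h : ∀ j : Fin N, j ∈ Finset.univ → -(p j) = (-1:ℂ) * p j := fun j _ => by ring
    rw [Finset.prod_congr rfl h, Finset.prod_mul_distrib, Finset.prod_const, Finset.card_univ,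
      Fintype.card_fin]
  have hD0 : D.coeff 0 = 0 := by
    rw [coeff_zero_eq_eval_zero]
    simp only [hD, eval_sub, eval_prod, eval_mul, eval_C, eval_X, eval_one, zero_sub, mul_zero,
      sub_zero, Finset.prod_const_one, mul_one]
    rw [hprodneg]
    ring
  have hDfac : D = X * D.divX := by
    conv_lhs => rw [← Polynomial.X_mul_divX_add D]
    rw [hD0, map_zero, add_zero]
  have hDeval : D.eval w = w * (D.divX.eval w) := by
    nth_rewrite 1 [hDfac]
    rw [eval_mul, eval_X]
  have hDev2 : D.eval w = (∏ j, (w - p j)) - (-1:ℂ)^N * (∏ j, p j) * ∏ j, (1 - conj (p j) * w) := by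
    simp [hD, eval_prod]
  have hwp : ∏ j, (w - p j) = w ^ N * ∏ j, (1 - p j * z) := prod_lin' p x
  calc (1 - (-1:ℂ)^N * (∏ j, p j) * blaschke p x) * conj (blaschke p x)
      = conj (blaschke p x) - (-1:ℂ)^N * (∏ j, p j) * (blaschke p x * conj (blaschke p x)) := by
        ring
    _ = w ^ N * (∏ j, (1 - p j * z)) / (∏ j, (1 - conj (p j) * w))
        - (-1:ℂ)^N * (∏ j, p j) := by
        rw [blaschke_mul_conj p hp x, conj_blaschke p hp x, mul_one]
    _ = D.eval w / (∏ j, (1 - conj (p j) * w)) := by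
        rw [hDev2, hwp, sub_div, mul_div_assoc, mul_div_cancel_right₀ _ hE]
    _ = w * (D.divX.eval w / (∏ j, (1 - conj (p j) * w))) := by
        rw [hDeval, mul_div_assoc]
    _ = _ := by rw [eval_prod]; simp

end Identities

/-- Let `u = A/B ∈ M(N)` with `B(z) = ∏_j (1 − p_j z)`, `|p_j| < 1`,
`b` the associated Blaschke product, `P_u` the orthogonal projection of `L²_+` onto
`Im H_u = (ker H_u)^⊥ = (bL²_+)^⊥`. Then `1 − P_u(1) = (−1)^N p₁⋯p_N · b`; i.e.
`v := (−1)^N p₁⋯p_N · b` satisfies `v ∈ ker H_u` (`Π(u conj v) = 0`) and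
`1 − v ⟂ ker H_u` (`Π((1−v)·conj b) = 0`); in particular
`‖1 − P_u(1)‖²_{L²} = |p₁⋯p_N|²`. -/
theorem stmt19 (N : ℕ) (hN : 0 < N) (p : Fin N → ℂ) (hp : ∀ j, ‖p j‖ < 1)
    (A : Polynomial ℂ) (hA : A ≠ 0) (hAdeg : A.natDegree ≤ N - 1)
    (hcop : IsCoprime A (∏ j, (1 - Polynomial.C (p j) * Polynomial.X)))
    (hdeg : A.natDegree = N - 1 ∨
      (∏ j, (1 - Polynomial.C (p j) * Polynomial.X)).natDegree = N)
    (u : AddCircle (2 * π) → ℂ)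
    (hu : ∀ x, u x = A.eval (circlePt x) /
      (∏ j, (1 - Polynomial.C (p j) * Polynomial.X)).eval (circlePt x))
    (v : AddCircle (2 * π) → ℂ)
    (hv : ∀ x, v x = (-1 : ℂ) ^ N * (∏ j, p j) * blaschke p x) :
    (∀ n : ℤ, 0 ≤ n → fourierCoeff (fun x => u x * conj (v x)) n = 0) ∧
    (∀ n : ℤ, 0 ≤ n → fourierCoeff (fun x => (1 - v x) * conj (blaschke p x)) n = 0) ∧
    (∫ x, ‖v x‖ ^ 2 ∂haarAddCircle) = ∏ j, ‖p j‖ ^ 2 := by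
  have hQdiff : ∀ (P : Polynomial ℂ), ∀ z ∈ Metric.closedBall (0:ℂ) 1, DifferentiableAt ℂ
      (fun ww => P.eval ww / (∏ j, (1 - C (conj (p j)) * X) : Polynomial ℂ).eval ww) z := by
    intro P z hz
    refine (Polynomial.differentiableAt _).div (Polynomial.differentiableAt _) ?_
    rw [eval_prod]
    refine Finset.prod_ne_zero_iff.2 fun j _ => ?_
    simp only [eval_sub, eval_one, eval_mul, eval_C, eval_X]
    refine one_sub_ne ?_ ?_
    · rw [RCLike.norm_conj]; exact hp j
    · exact mem_closedBall_zero_iff.1 hz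
  refine ⟨fun n hn => ?_, fun n hn => ?_, ?_⟩
  · have hfun : (fun x => u x * conj (v x)) = fun x : AddCircle (2*π) =>
        conj (circlePt x) *
          ((C ((-1:ℂ)^N * ∏ j, conj (p j)) *
            ∑ k ∈ Finset.range N, C (A.coeff k) * X ^ (N - 1 - k)).eval (conj (circlePt x))
            / (∏ j, (1 - C (conj (p j)) * X) : Polynomial ℂ).eval (conj (circlePt x))) := by
      funext x
      rw [hu, hv]
      exact id1 p hp A (by omega) x
    rw [hfun]
    exact core_aux _ (hQdiff _) n hn
  · have hfun : (fun x => (1 - v x) * conj (blaschke p x)) = fun x : AddCircle (2*π) =>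
        conj (circlePt x) *
          ((((∏ j, (X - C (p j))) -
              C ((-1:ℂ)^N * ∏ j, p j) * ∏ j, (1 - C (conj (p j)) * X)).divX).eval
              (conj (circlePt x))
            / (∏ j, (1 - C (conj (p j)) * X) : Polynomial ℂ).eval (conj (circlePt x))) := by
      funext x
      rw [hv]
      exact id2 p hp x
    rw [hfun]
    exact core_aux _ (hQdiff _) n hn
  · have hb1 : ∀ x, ‖blaschke p x‖ = 1 := by
      intro x
      rw [blaschke, norm_prod, Finset.prod_eq_one]
      intro j _
      have hwz : conj (circlePt x) * circlePt x = 1 := conj_mul_circlePt x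
      have h : 1 - p j * circlePt x = circlePt x * conj (circlePt x - conj (p j)) := by
        rw [map_sub, Complex.conj_conj]
        linear_combination -hwz
      have hnum : circlePt x - conj (p j) ≠ 0 := by
        intro hc
        exact hden p hp x j (by rw [h, hc, map_zero, mul_zero])
      rw [norm_div, h, norm_mul, norm_circlePt, one_mul, RCLike.norm_conj,
        div_self (norm_ne_zero_iff.2 hnum)]
    have hvn : ∀ x, ‖v x‖ ^ 2 = ∏ j, ‖p j‖ ^ 2 := by
      intro x
      rw [hv, norm_mul, norm_mul, norm_pow, norm_neg, norm_one, one_pow, one_mul, hb1, mul_one,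
        norm_prod, ← Finset.prod_pow]
    simp only [hvn]
    simp [measure_univ]
end
end
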